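/- Consider the controlled single-virus system ẋ = (−K diag(x) + B − diag(x)B)x with K a positive diagonal matrix and B an irreducible nonnegative matrix, arising from the distributed proportional feedback δ_i(t) = k_i x_i(t). Then ρ(K^{-1}(K + B)) > 1; consequently the controlled system has the same form as an SIS system ẋ = (−K + (K+B) − diag(x)(K+B))x with s(−K + (K+B)) > 0, so it admits a unique strictly positive equilibrium x* with 0 ≪ x* ≪ 1. -/

import Mathlib

/-!
Since `K⁻¹(K + B) = 1 + K⁻¹B` and `-K + (K + B) = B`, both spectral claims reduce to: a nonnegative
irreducible matrix `A` of size `n > 1` has an eigenvalue with positive real part. Otherwise, as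
`tr A ≥ 0` is the sum of the eigenvalues, they are all purely imaginary; the eigenvalues of `A²`
are then real and `≤ 0` with sum `tr A² ≥ 0`, so they all vanish, which contradicts `tr Aᵏ > 0`
for the length `k` of a closed walk in the graph of `A`.

The equilibrium equations read `kᵢ xᵢ² = (Bx)ᵢ (1 - xᵢ)`. Solving the `i`-th one for `xᵢ ≥ 0`
gives a monotone self-map of `[0, 1]ⁿ`; its greatest fixed point dominates a small constant
vector, hence is positive. For uniqueness, let `θ` be least with `x ≤ θ y`: the equation at a
coordinate where this is tight forces `θ ≤ 1`.
-/

open Matrix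

/-- A square matrix is irreducible if for every proper nonempty subset `S` of indices
there are `i ∈ S` and `j ∉ S` with `M i j ≠ 0`. -/
def MatIrred {n : ℕ} (M : Matrix (Fin n) (Fin n) ℝ) : Prop :=
  ∀ S : Finset (Fin n), S.Nonempty → S ≠ Finset.univ →
    ∃ i ∈ S, ∃ j, j ∉ S ∧ M i j ≠ 0

/-- Spectral abscissa: the largest real part among the (complex) eigenvalues. -/
noncomputable def specAbs {n : ℕ} (M : Matrix (Fin n) (Fin n) ℝ) : ℝ :=
  sSup (Complex.re '' spectrum ℂ (M.map (Complex.ofReal)))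

/-- Spectral radius: the largest modulus among the (complex) eigenvalues. -/
noncomputable def specRad {n : ℕ} (M : Matrix (Fin n) (Fin n) ℝ) : ℝ :=
  sSup ((fun z : ℂ => ‖z‖) '' spectrum ℂ (M.map (Complex.ofReal)))

namespace Matrix

section Spectrum

variable {ι : Type*} [Fintype ι] [DecidableEq ι]

theorem re_trace_eq_sum_roots (N : Matrix ι ι ℂ) :
    N.trace.re = (N.charpoly.roots.map Complex.re).sum := by
  rw [trace_eq_sum_roots_charpoly]
  exact map_multiset_sum Complex.reAddGroupHom _

theorem re_trace_le_zero {N : Matrix ι ι ℂ} (h : ∀ μ ∈ spectrum ℂ N, μ.re ≤ 0) :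
    N.trace.re ≤ 0 := by
  rw [re_trace_eq_sum_roots]
  simpa using Multiset.sum_map_le_sum_map _ (fun _ ↦ (0 : ℝ)) fun μ hμ ↦
    h μ (mem_spectrum_iff_isRoot_charpoly.2 (Polynomial.isRoot_of_mem_roots hμ))

theorem re_trace_lt_zero {N : Matrix ι ι ℂ} (h : ∀ μ ∈ spectrum ℂ N, μ.re ≤ 0) {μ : ℂ}
    (hμ : μ ∈ spectrum ℂ N) (hμre : μ.re < 0) : N.trace.re < 0 := by
  rw [re_trace_eq_sum_roots]
  have hroot : μ ∈ N.charpoly.roots :=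
    Polynomial.mem_roots'.2 ⟨N.charpoly_monic.ne_zero, mem_spectrum_iff_isRoot_charpoly.1 hμ⟩
  simpa using Multiset.sum_lt_sum (fun ν hν ↦
    h ν (mem_spectrum_iff_isRoot_charpoly.2 (Polynomial.isRoot_of_mem_roots hν))) ⟨μ, hroot, hμre⟩

theorem exists_re_pos_mem_spectrum_of_trace {M : Matrix ι ι ℂ} (h₁ : 0 ≤ M.trace.re)
    (h₂ : 0 ≤ (M ^ 2).trace.re) {q : ℕ} (hq : 0 < q) (hpos : 0 < (M ^ q).trace.re) :
    ∃ μ ∈ spectrum ℂ M, 0 < μ.re := by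
  by_contra! hM
  have hre : ∀ μ ∈ spectrum ℂ M, μ.re = 0 := fun μ hμ ↦
    (hM μ hμ).antisymm (not_lt.1 fun hlt ↦ (re_trace_lt_zero hM hμ hlt).not_ge h₁)
  have hsq : ∀ ν ∈ spectrum ℂ (M ^ 2), ν.re ≤ 0 := by
    rw [spectrum.map_pow_of_pos M two_pos]
    rintro _ ⟨μ, hμ, rfl⟩
    simp only [sq, Complex.mul_re, hre μ hμ]
    nlinarith
  have hzero : ∀ μ ∈ spectrum ℂ M, μ = 0 := by
    intro μ hμ
    by_contra hne
    have him : μ.im ≠ 0 := fun him ↦ hne (Complex.ext (hre μ hμ) him)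
    refine (re_trace_lt_zero hsq (spectrum.pow_mem_pow M 2 hμ) ?_).not_ge h₂
    simp only [sq, Complex.mul_re, hre μ hμ]
    nlinarith [mul_self_pos.2 him]
  refine (re_trace_le_zero ?_).not_gt hpos
  rw [spectrum.map_pow_of_pos M hq]
  rintro _ ⟨μ, hμ, rfl⟩
  simp [hzero μ hμ, zero_pow hq.ne']

end Spectrum

variable {ι : Type*} [Fintype ι] {A P Q : Matrix ι ι ℝ}

theorem mul_apply_pos (hP : ∀ i j, 0 ≤ P i j) (hQ : ∀ i j, 0 ≤ Q i j) {i l j : ι}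
    (hil : 0 < P i l) (hlj : 0 < Q l j) : 0 < (P * Q) i j :=
  Finset.sum_pos' (fun l _ ↦ mul_nonneg (hP i l) (hQ l j)) ⟨l, Finset.mem_univ l, mul_pos hil hlj⟩

theorem trace_pow_nonneg [DecidableEq ι] (hA : ∀ i j, 0 ≤ A i j) (m : ℕ) : 0 ≤ (A ^ m).trace :=
  Finset.sum_nonneg fun i _ ↦ pow_apply_nonneg hA m i i

theorem mulVec_nonneg (hA : ∀ i j, 0 ≤ A i j) {x : ι → ℝ} (hx : 0 ≤ x) : 0 ≤ A *ᵥ x :=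
  fun i ↦ Finset.sum_nonneg fun j _ ↦ mul_nonneg (hA i j) (hx j)

theorem mulVec_mono_of_nonneg (hA : ∀ i j, 0 ≤ A i j) {x y : ι → ℝ} (hxy : x ≤ y) :
    A *ᵥ x ≤ A *ᵥ y :=
  fun i ↦ Finset.sum_le_sum fun j _ ↦ mul_le_mul_of_nonneg_left (hxy j) (hA i j)

theorem mulVec_apply_pos (hA : ∀ i j, 0 ≤ A i j) {x : ι → ℝ} (hx : ∀ j, 0 < x j) {i : ι}
    (hi : ∃ j, 0 < A i j) : 0 < (A *ᵥ x) i := by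
  obtain ⟨j, hj⟩ := hi
  exact Finset.sum_pos' (fun l _ ↦ mul_nonneg (hA i l) (hx l).le)
    ⟨j, Finset.mem_univ j, mul_pos hj (hx j)⟩

theorem IsIrreducible.exists_re_pos_mem_spectrum [DecidableEq ι] [Nontrivial ι]
    (hA : A.IsIrreducible) : ∃ μ ∈ spectrum ℂ (A.map Complex.ofReal), 0 < μ.re := by
  have re_trace (m : ℕ) : ((A.map Complex.ofReal) ^ m).trace.re = (A ^ m).trace := by
    have hmap : A.map Complex.ofReal ^ m = (A ^ m).map Complex.ofReal :=
      (Matrix.map_pow A Complex.ofRealHom m).symm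
    rw [hmap, trace, Complex.re_sum]
    rfl
  obtain ⟨i⟩ := (inferInstance : Nonempty ι)
  obtain ⟨q, hq, hqi⟩ := (isIrreducible_iff_exists_pow_pos hA.nonneg).1 hA i i
  have htrace : 0 < (A ^ q).trace :=
    Finset.sum_pos' (fun j _ ↦ pow_apply_nonneg hA.nonneg q j j) ⟨i, Finset.mem_univ i, hqi⟩
  refine exists_re_pos_mem_spectrum_of_trace ?_ ?_ hq ?_
  · rw [← pow_one (A.map _), re_trace]; exact trace_pow_nonneg hA.nonneg 1
  · rw [re_trace]; exact trace_pow_nonneg hA.nonneg 2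
  · rwa [re_trace]

end Matrix

theorem MatIrred.of_apply_ne_zero {n : ℕ} {A B : Matrix (Fin n) (Fin n) ℝ} (hA : MatIrred A)
    (h : ∀ i j, A i j ≠ 0 → B i j ≠ 0) : MatIrred B := fun S hS hSu ↦ by
  obtain ⟨i, hi, j, hj, hij⟩ := hA S hS hSu
  exact ⟨i, hi, j, hj, h i j hij⟩

theorem MatIrred.exists_apply_pos {n : ℕ} {A : Matrix (Fin n) (Fin n) ℝ} (hn : 1 < n)
    (hA : ∀ i j, 0 ≤ A i j) (hirr : MatIrred A) (i : Fin n) : ∃ j, 0 < A i j := by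
  have hne : ({i} : Finset (Fin n)) ≠ Finset.univ := fun h ↦ by
    obtain ⟨j, hj⟩ := Fintype.exists_ne_of_one_lt_card (by simpa using hn) i
    exact hj (Finset.mem_singleton.1 (h ▸ Finset.mem_univ j))
  obtain ⟨i', hi', j, -, hij⟩ := hirr {i} (Finset.singleton_nonempty i) hne
  rw [Finset.mem_singleton.1 hi'] at hij
  exact ⟨j, (hA i j).lt_of_ne' hij⟩

theorem MatIrred.isIrreducible {n : ℕ} {A : Matrix (Fin n) (Fin n) ℝ} (hn : 1 < n)
    (hA : ∀ i j, 0 ≤ A i j) (hirr : MatIrred A) : A.IsIrreducible := by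
  classical
  rw [isIrreducible_iff_exists_pow_pos hA]
  intro i j
  by_contra! hj
  set R := Finset.univ.filter fun l ↦ ∃ k > 0, 0 < (A ^ k) i l
  obtain ⟨l, hl⟩ := hirr.exists_apply_pos hn hA i
  have hlR : l ∈ R := Finset.mem_filter.2 ⟨Finset.mem_univ l, 1, one_pos, by rwa [pow_one]⟩
  have hRu : R ≠ Finset.univ := fun h ↦ by
    obtain ⟨k, hk, hkj⟩ := (Finset.mem_filter.1 (h ▸ Finset.mem_univ j)).2
    exact (hj k hk).not_gt hkj
  obtain ⟨a, haR, b, hbR, hab⟩ := hirr R ⟨l, hlR⟩ hRu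
  obtain ⟨k, hk, hka⟩ := (Finset.mem_filter.1 haR).2
  refine hbR (Finset.mem_filter.2 ⟨Finset.mem_univ b, k + 1, k.succ_pos, ?_⟩)
  rw [pow_succ]
  exact mul_apply_pos (pow_apply_nonneg hA k) hA hka ((hA a b).lt_of_ne' hab)

theorem re_le_specAbs {n : ℕ} {M : Matrix (Fin n) (Fin n) ℝ} {μ : ℂ}
    (hμ : μ ∈ spectrum ℂ (M.map Complex.ofReal)) : μ.re ≤ specAbs M :=
  le_csSup ((Matrix.finite_spectrum _).image _).bddAbove ⟨μ, hμ, rfl⟩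

theorem norm_le_specRad {n : ℕ} {M : Matrix (Fin n) (Fin n) ℝ} {μ : ℂ}
    (hμ : μ ∈ spectrum ℂ (M.map Complex.ofReal)) : ‖μ‖ ≤ specRad M :=
  le_csSup ((Matrix.finite_spectrum _).image _).bddAbove ⟨μ, hμ, rfl⟩

theorem one_lt_specRad_one_add {n : ℕ} {A : Matrix (Fin n) (Fin n) ℝ} (hn : 1 < n)
    (hA : A.IsIrreducible) : 1 < specRad (1 + A) := by
  have : Nontrivial (Fin n) := Fin.nontrivial_iff_two_le.2 hn
  obtain ⟨μ, hμ, hμre⟩ := hA.exists_re_pos_mem_spectrum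
  have hmap : (1 + A).map Complex.ofReal = algebraMap ℂ _ 1 + A.map Complex.ofReal := by
    rw [map_one, Matrix.map_add _ Complex.ofReal_add,
      Matrix.map_one _ Complex.ofReal_zero Complex.ofReal_one]
  have hmem : μ + 1 ∈ spectrum ℂ ((1 + A).map Complex.ofReal) := by
    rwa [hmap, spectrum.add_mem_add_iff]
  calc 1 < (μ + 1).re := by simp [hμre]
    _ ≤ ‖μ + 1‖ := Complex.re_le_norm _
    _ ≤ specRad (1 + A) := norm_le_specRad hmem

-- the nonnegative root `t` of `k t ^ 2 = w (1 - t)`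
noncomputable def sisRoot (k w : ℝ) : ℝ := (-w + √(w ^ 2 + 4 * k * w)) / (2 * k)

section sisRoot

variable {k w : ℝ}

theorem sisRoot_nonneg (hk : 0 < k) (hw : 0 ≤ w) : 0 ≤ sisRoot k w := by
  have : w ≤ √(w ^ 2 + 4 * k * w) := (Real.le_sqrt hw (by positivity)).2 (by nlinarith)
  unfold sisRoot
  apply div_nonneg <;> linarith

theorem sisRoot_eq (hk : 0 < k) (hw : 0 ≤ w) :
    k * sisRoot k w ^ 2 = w * (1 - sisRoot k w) := by
  have hs : √(w ^ 2 + 4 * k * w) ^ 2 = w ^ 2 + 4 * k * w := Real.sq_sqrt (by positivity)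
  unfold sisRoot
  generalize √(w ^ 2 + 4 * k * w) = s at hs ⊢
  field_simp
  linear_combination hs

theorem le_sisRoot_iff (hk : 0 < k) (hw : 0 ≤ w) {a : ℝ} (ha : 0 ≤ a) :
    a ≤ sisRoot k w ↔ k * a ^ 2 ≤ w * (1 - a) := by
  have hg := sisRoot_eq hk hw
  have hg0 := sisRoot_nonneg hk hw
  constructor
  · intro h
    nlinarith [mul_le_mul h h ha hg0]
  · intro h
    by_contra! hlt
    nlinarith [mul_lt_mul'' hlt hlt hg0 hg0]

theorem sisRoot_lt_one (hk : 0 < k) (hw : 0 ≤ w) : sisRoot k w < 1 := by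
  by_contra! h
  have := (le_sisRoot_iff hk hw zero_le_one).1 h
  linarith

theorem sisRoot_mono (hk : 0 < k) (hw : 0 ≤ w) {w' : ℝ} (hww' : w ≤ w') :
    sisRoot k w ≤ sisRoot k w' := by
  rw [le_sisRoot_iff hk (hw.trans hww') (sisRoot_nonneg hk hw), sisRoot_eq hk hw]
  exact mul_le_mul_of_nonneg_right hww' (by linarith [sisRoot_lt_one hk hw])

end sisRoot

section Equilibrium

variable {ι : Type*} [Fintype ι] {k : ι → ℝ} {B : Matrix ι ι ℝ}

def IsSISEquilibrium (k : ι → ℝ) (B : Matrix ι ι ℝ) (x : ι → ℝ) : Prop :=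
  ∀ i, k i * x i ^ 2 = (B *ᵥ x) i * (1 - x i)

theorem IsSISEquilibrium.le (hB : ∀ i j, 0 ≤ B i j) (hrow : ∀ i, ∃ j, 0 < B i j)
    {x y : ι → ℝ} (hx : IsSISEquilibrium k B x) (hy : IsSISEquilibrium k B y)
    (hx0 : ∀ i, 0 < x i) (hx1 : ∀ i, x i ≤ 1) (hy0 : ∀ i, 0 < y i) : x ≤ y := by
  intro i
  have : Nonempty ι := ⟨i⟩
  -- compare `x` with the smallest multiple `θ • y` that dominates it
  obtain ⟨i₀, hi₀⟩ := Finite.exists_max fun j ↦ x j / y j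
  set θ := x i₀ / y i₀
  have hxθ : x ≤ θ • y := fun j ↦ (div_le_iff₀ (hy0 j)).1 (hi₀ j)
  have hθ : 0 < θ := div_pos (hx0 i₀) (hy0 i₀)
  have hxi₀ : x i₀ = θ * y i₀ := (div_mul_cancel₀ _ (hy0 i₀).ne').symm
  have hBy : 0 < (B *ᵥ y) i₀ := mulVec_apply_pos hB hy0 (hrow i₀)
  have hBx : (B *ᵥ x) i₀ ≤ θ * (B *ᵥ y) i₀ := by
    simpa [mulVec_smul] using mulVec_mono_of_nonneg hB hxθ i₀
  have hθ1 : θ ≤ 1 := by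
    have : θ * (θ * ((B *ᵥ y) i₀ * (1 - y i₀))) ≤ θ * ((B *ᵥ y) i₀ * (1 - θ * y i₀)) := by
      calc θ * (θ * ((B *ᵥ y) i₀ * (1 - y i₀))) = (B *ᵥ x) i₀ * (1 - x i₀) := by
            rw [← hx i₀, ← hy i₀, hxi₀]; ring
        _ ≤ θ * (B *ᵥ y) i₀ * (1 - x i₀) := mul_le_mul_of_nonneg_right hBx (by linarith [hx1 i₀])
        _ = θ * ((B *ᵥ y) i₀ * (1 - θ * y i₀)) := by rw [hxi₀]; ring
    nlinarith [mul_pos hθ hBy]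
  calc x i ≤ θ * y i := hxθ i
    _ ≤ y i := mul_le_of_le_one_left (hy0 i).le hθ1

theorem exists_pos_le_sisRoot [Nonempty ι] (hk : ∀ i, 0 < k i) (hB : ∀ i j, 0 ≤ B i j)
    (hrow : ∀ i, ∃ j, 0 < B i j) :
    ∃ ε, 0 < ε ∧ ε < 1 ∧ ∀ i, ε ≤ sisRoot (k i) ((B *ᵥ fun _ ↦ ε) i) := by
  set b := B *ᵥ fun _ ↦ (1 : ℝ)
  have hb (i : ι) : 0 < b i := mulVec_apply_pos hB (fun _ ↦ one_pos) (hrow i)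
  have hkb (i : ι) : 0 < k i + b i := add_pos (hk i) (hb i)
  obtain ⟨i₀, hi₀⟩ := Finite.exists_min fun i ↦ b i / (k i + b i)
  set ε := b i₀ / (k i₀ + b i₀)
  have hε : 0 < ε := div_pos (hb i₀) (hkb i₀)
  refine ⟨ε, hε, (div_lt_one (hkb i₀)).2 (by linarith [hk i₀]), fun i ↦ ?_⟩
  have hεi : ε * (k i + b i) ≤ b i := (le_div_iff₀ (hkb i)).1 (hi₀ i)
  have hBε : (B *ᵥ fun _ ↦ ε) i = ε * b i := by
    rw [show (fun _ ↦ ε) = ε • fun _ : ι ↦ (1 : ℝ) by ext; simp, mulVec_smul]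
    rfl
  rw [hBε, le_sisRoot_iff (hk i) (mul_nonneg hε.le (hb i).le) hε.le]
  nlinarith

theorem exists_isSISEquilibrium [Nonempty ι] (hk : ∀ i, 0 < k i) (hB : ∀ i j, 0 ≤ B i j)
    (hrow : ∀ i, ∃ j, 0 < B i j) :
    ∃ x, (∀ i, 0 < x i ∧ x i < 1) ∧ IsSISEquilibrium k B x := by
  have hBx0 (x : Set.Icc (0 : ι → ℝ) 1) (i : ι) : 0 ≤ (B *ᵥ x) i := mulVec_nonneg hB x.2.1 i
  -- Tarski's fixed point theorem for `x ↦ (sisRoot (k i) ((B *ᵥ x) i))ᵢ` on the box `[0, 1]ⁿ`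
  let F : Set.Icc (0 : ι → ℝ) 1 →o Set.Icc (0 : ι → ℝ) 1 :=
    { toFun x := ⟨fun i ↦ sisRoot (k i) ((B *ᵥ x) i), fun i ↦ sisRoot_nonneg (hk i) (hBx0 x i),
        fun i ↦ (sisRoot_lt_one (hk i) (hBx0 x i)).le⟩
      monotone' x y hxy i := sisRoot_mono (hk i) (hBx0 x i) (mulVec_mono_of_nonneg hB hxy i) }
  set u := F.gfp
  have hu (i : ι) : (u : ι → ℝ) i = sisRoot (k i) ((B *ᵥ u) i) :=
    congrFun (congrArg Subtype.val F.map_gfp.symm) i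
  obtain ⟨ε, hε, hε1, hεF⟩ := exists_pos_le_sisRoot hk hB hrow
  have hεu : (⟨fun _ ↦ ε, fun _ ↦ hε.le, fun _ ↦ hε1.le⟩ : Set.Icc (0 : ι → ℝ) 1) ≤ u :=
    F.le_gfp hεF
  refine ⟨u, fun i ↦ ⟨hε.trans_le (hεu i), hu i ▸ sisRoot_lt_one (hk i) (hBx0 u i)⟩, fun i ↦ ?_⟩
  rw [hu i]
  exact sisRoot_eq (hk i) (hBx0 u i)

theorem existsUnique_isSISEquilibrium [Nonempty ι] (hk : ∀ i, 0 < k i) (hB : ∀ i j, 0 ≤ B i j)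
    (hrow : ∀ i, ∃ j, 0 < B i j) :
    ∃! x, (∀ i, 0 < x i ∧ x i < 1) ∧ IsSISEquilibrium k B x := by
  obtain ⟨x, hx, hxeq⟩ := exists_isSISEquilibrium hk hB hrow
  refine ⟨x, ⟨hx, hxeq⟩, fun y ⟨hy, hyeq⟩ ↦ le_antisymm ?_ ?_⟩
  · exact hyeq.le hB hrow hxeq (fun i ↦ (hy i).1) (fun i ↦ (hy i).2.le) fun i ↦ (hx i).1
  · exact hxeq.le hB hrow hyeq (fun i ↦ (hx i).1) (fun i ↦ (hx i).2.le) fun i ↦ (hy i).1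

theorem mulVec_eq_zero_iff_isSISEquilibrium [DecidableEq ι] (k : ι → ℝ) (B : Matrix ι ι ℝ)
    (x : ι → ℝ) :
    (-(diagonal k) + (diagonal k + B) - diagonal x * (diagonal k + B)) *ᵥ x = 0 ↔
      IsSISEquilibrium k B x := by
  rw [neg_add_cancel_left, funext_iff]
  refine forall_congr' fun i ↦ ?_
  simp only [sub_mulVec, ← mulVec_mulVec, add_mulVec, mulVec_diagonal, Pi.sub_apply, Pi.add_apply,
    Pi.zero_apply]
  constructor <;> intro h <;> linear_combination -h

end Equilibrium

theorem stmt17 {n : ℕ} (hn : 1 < n) (k : Fin n → ℝ) (hk : ∀ i, 0 < k i)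
    (B : Matrix (Fin n) (Fin n) ℝ) (hB : ∀ i j, 0 ≤ B i j) (hirr : MatIrred B) :
    1 < specRad ((Matrix.diagonal k)⁻¹ * (Matrix.diagonal k + B)) ∧
    0 < specAbs (-(Matrix.diagonal k) + (Matrix.diagonal k + B)) ∧
    ∃! x : Fin n → ℝ, (∀ i, 0 < x i ∧ x i < 1) ∧
      (-(Matrix.diagonal k) + (Matrix.diagonal k + B)
        - Matrix.diagonal x * (Matrix.diagonal k + B)).mulVec x = 0 := by
  have : Nontrivial (Fin n) := Fin.nontrivial_iff_two_le.2 hn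
  have hBirr : B.IsIrreducible := hirr.isIrreducible hn hB
  set D := diagonal fun i ↦ (k i)⁻¹
  have hDK : D * diagonal k = 1 := by
    simp [D, diagonal_mul_diagonal, inv_mul_cancel₀ (hk _).ne']
  have hDB : (D * B).IsIrreducible := by
    refine (hirr.of_apply_ne_zero fun i j h ↦ ?_).isIrreducible hn fun i j ↦ ?_ <;>
      rw [diagonal_mul]
    exacts [mul_ne_zero (inv_ne_zero (hk i).ne') h, mul_nonneg (inv_nonneg.2 (hk i).le) (hB i j)]
  refine ⟨?_, ?_, ?_⟩
  · rw [inv_eq_left_inv hDK, mul_add, hDK]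
    exact one_lt_specRad_one_add hn hDB
  · obtain ⟨μ, hμ, hμre⟩ := hBirr.exists_re_pos_mem_spectrum
    rw [neg_add_cancel_left]
    exact hμre.trans_le (re_le_specAbs hμ)
  · simp_rw [mulVec_eq_zero_iff_isSISEquilibrium]
    exact existsUnique_isSISEquilibrium hk hB hBirr.exists_pos
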